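/- arXiv:1803.06463 — 3 statements merged into one kernel-verified Lean document; each statement's English description precedes it below -/
import Mathlib

section
/- Let N ≥ 2 and let M = (m_{i,j}) ∈ M(N,r) with λ = ro(M) and μ = co(M). Fix h with 1 ≤ h < N and λ_{h+1} ≥ 1, and set λ⁺ = λ + e_h − e_{h+1} ∈ Λ(N,r), where e_i ∈ ℕ^N is the i-th standard basis vector. Then the set product (W_{λ⁺}·W_λ)·(W_λ d_M W_μ) = {x·y : x ∈ W_{λ⁺}W_λ, y ∈ W_λ d_M W_μ} is equal to the union, over those k ∈ {1,…,N} with m_{h+1,k} ≥ 1, of the double cosets W_{λ⁺} d_{M⁺_{h,k}} W_μ, and these double cosets are pairwise disjoint. -/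
/-!
Two permutations lie in the same double coset `W_λ w W_μ` iff they have the same intersection
matrix `(|N_i^λ ∩ w(N_j^μ)|)_{i,j}`. Passing from `λ` to `λ⁺` moves a single point `p`, the
first point of block `h + 1`, into block `h`; hence for `u ∈ W_λ d_M` the intersection matrix
of `u` with respect to `(λ⁺, μ)` is `M⁺_{h,k}`, where `k` is the `μ`-block of `u⁻¹ p`, and
`m_{h+1,k} ≥ 1` because `u⁻¹ p` is a witness. Conversely, for any such `k`, composing `d_M`
with the transposition of `p` and a point of `N_{h+1}^λ ∩ d_M(N_k^μ)` gives an element of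
`W_λ d_M` with that `k`. The double cosets are disjoint because the matrices `M⁺_{h,k}` differ
in row `h`.
-/

open Equiv Finset

/-- The simple transposition `s i = (i, i+1)` (1-based) in the symmetric group `W` on
`{1, …, r}`, realised as `Equiv.Perm (Fin r)`, where the point `x : Fin r` carries the
label `x.val + 1`.  For `i` outside the range `1 ≤ i < r` we set `s i = 1`. -/
def sT (r : ℕ) (i : ℕ) : Equiv.Perm (Fin r) :=
  if h : 1 ≤ i ∧ i < r then Equiv.swap ⟨i - 1, by omega⟩ ⟨i, h.2⟩ else 1

/-- The ascending product `s_a · s_{a+1} ⋯ s_{a+n-1}` (equal to `1` when `n = 0`);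
the rightmost factor acts first. -/
def ascProd (r a n : ℕ) : Equiv.Perm (Fin r) :=
  ((List.range n).map (fun t => sT r (a + t))).prod

/-- The descending product `s_b · s_{b-1} ⋯ s_{b-n+1}` (equal to `1` when `n = 0`);
the rightmost factor acts first. -/
def descProd (r b n : ℕ) : Equiv.Perm (Fin r) :=
  ((List.range n).map (fun t => sT r (b - t))).prod

/-- The Coxeter length `ℓ(w)`, i.e. the number of inversions of `w`. -/
def clen {r : ℕ} (w : Equiv.Perm (Fin r)) : ℕ :=
  (Finset.univ.filter (fun p : Fin r × Fin r => p.1 < p.2 ∧ w p.2 < w p.1)).card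

/-- `ptil lam i` is the partial sum `λ̃_i = λ_1 + ⋯ + λ_i` (1-based `i`). -/
def ptil {N : ℕ} (lam : Fin N → ℕ) (i : ℕ) : ℕ :=
  ∑ l : Fin N, if l.val + 1 ≤ i then lam l else 0

/-- The block `N_i^λ = {λ̃_{i-1}+1, …, λ̃_i}` (1-based `i`), as a set of points of `Fin r`
(the point `x` has label `x.val + 1`). -/
def blockSet (r : ℕ) {N : ℕ} (lam : Fin N → ℕ) (i : ℕ) : Finset (Fin r) :=
  Finset.univ.filter (fun x => ptil lam (i - 1) ≤ x.val ∧ x.val < ptil lam i)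

/-- The index of the block of `λ` containing the point `x`. -/
def blockOf {r N : ℕ} (lam : Fin N → ℕ) (x : Fin r) : ℕ :=
  ((Finset.range N).filter (fun i => ptil lam (i + 1) ≤ x.val)).card

/-- The Young subgroup `W_λ`: all permutations stabilizing each block `N_i^λ`. -/
def young (r : ℕ) {N : ℕ} (lam : Fin N → ℕ) : Subgroup (Equiv.Perm (Fin r)) where
  carrier := {w | ∀ x : Fin r, blockOf lam (w x) = blockOf lam x}
  one_mem' := by intro x; rfl
  mul_mem' := by
    intro a b ha hb x
    have h := (ha (b x)).trans (hb x)
    simpa [Equiv.Perm.mul_apply] using h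
  inv_mem' := by
    intro a ha x
    have h := ha (a⁻¹ x)
    simpa using h.symm

/-- The double coset `W_λ d W_μ`, as a set of permutations. -/
def dcoset (r : ℕ) {N : ℕ} (lam mu : Fin N → ℕ) (d : Equiv.Perm (Fin r)) :
    Set (Equiv.Perm (Fin r)) :=
  {w | ∃ x ∈ young r lam, ∃ y ∈ young r mu, w = x * d * y}

/-- `d ∈ 𝒟_{λμ}`: `d` has minimal length in its double coset `W_λ d W_μ`. -/
def isMinRep (r : ℕ) {N : ℕ} (lam mu : Fin N → ℕ) (d : Equiv.Perm (Fin r)) : Prop :=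
  ∀ w ∈ dcoset r lam mu d, clen d ≤ clen w

/-- The composition `ro M` of row sums of a matrix. -/
def rowSums {N : ℕ} (M : Fin N → Fin N → ℕ) : Fin N → ℕ := fun i => ∑ j, M i j

/-- The composition `co M` of column sums of a matrix. -/
def colSums {N : ℕ} (M : Fin N → Fin N → ℕ) : Fin N → ℕ := fun j => ∑ i, M i j

/-- `d` is the distinguished double coset representative `d_M` attached to the matrix `M`:
`d` is the minimal length element in its `(W_{ro M}, W_{co M})` double coset, and
`|N_i^{ro M} ∩ d(N_j^{co M})| = m_{i,j}` for all `i, j`. -/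
def isDM (r : ℕ) {N : ℕ} (M : Fin N → Fin N → ℕ) (d : Equiv.Perm (Fin r)) : Prop :=
  isMinRep r (rowSums M) (colSums M) d ∧
    ∀ i j : Fin N,
      ((blockSet r (rowSums M) (i.val + 1)) ∩
        (blockSet r (colSums M) (j.val + 1)).image d).card = M i j

/-- The `(i,j)` entry of `M` with 1-based indices (`0` outside the range). -/
def ent {N : ℕ} (M : Fin N → Fin N → ℕ) (i j : ℕ) : ℕ :=
  if h : 1 ≤ i ∧ i ≤ N ∧ 1 ≤ j ∧ j ≤ N then M ⟨i - 1, by omega⟩ ⟨j - 1, by omega⟩ else 0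

/-- `μ̃_{j-1}` for `μ = co M`: the sum of the first `j - 1` column sums of `M`. -/
def colPS {N : ℕ} (M : Fin N → Fin N → ℕ) (j : ℕ) : ℕ :=
  ∑ p : Fin N × Fin N, if p.2.val + 1 < j then M p.1 p.2 else 0

/-- `σ_{i,j} = μ̃_{j-1} + Σ_{k ≤ i, l ≥ j} m_{k,l}` (1-based `i, j`). -/
def sigmaS {N : ℕ} (M : Fin N → Fin N → ℕ) (i j : ℕ) : ℕ :=
  colPS M j + ∑ p : Fin N × Fin N, if p.1.val + 1 ≤ i ∧ j ≤ p.2.val + 1 then M p.1 p.2 else 0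

/-- `m̃_{i,j} = μ̃_{j-1} + Σ_{h ≤ i} m_{h,j}` (1-based `i, j`): the partial sum of the
column-reading sequence of `M` up to the entry `(i, j)`. -/
def mtil {N : ℕ} (M : Fin N → Fin N → ℕ) (i j : ℕ) : ℕ :=
  colPS M j + ∑ p : Fin N × Fin N, if p.1.val + 1 ≤ i ∧ p.2.val + 1 = j then M p.1 p.2 else 0

/-- The element `w_{i,j}` (1-based `i, j`):
`w_{i,j} = (s_{σ_{i-1,j}} ⋯ s_{m̃_{i-1,j}+1})(s_{σ_{i-1,j}+1} ⋯ s_{m̃_{i-1,j}+2}) ⋯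
(s_{σ_{i-1,j}+m_{i,j}-1} ⋯ s_{m̃_{i,j}})`, with `w_{i,j} = 1` when `m_{i,j} = 0` or
`σ_{i-1,j} = m̃_{i-1,j}`. -/
def wE (r : ℕ) {N : ℕ} (M : Fin N → Fin N → ℕ) (i j : ℕ) : Equiv.Perm (Fin r) :=
  ((List.range (ent M i j)).map
    (fun x => descProd r (sigmaS M (i - 1) j + x) (sigmaS M (i - 1) j - mtil M (i - 1) j))).prod

/-- The column product `w_{2,j} w_{3,j} ⋯ w_{N,j}`. -/
def colProd (r : ℕ) {N : ℕ} (M : Fin N → Fin N → ℕ) (j : ℕ) : Equiv.Perm (Fin r) :=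
  ((List.range (N - 1)).map (fun t => wE r M (t + 2) j)).prod

/-- `Π_t`: the product of the first `t` column products
`(w_{2,1} ⋯ w_{N,1})(w_{2,2} ⋯ w_{N,2}) ⋯ (w_{2,t} ⋯ w_{N,t})`. -/
def piProd (r : ℕ) {N : ℕ} (M : Fin N → Fin N → ℕ) (t : ℕ) : Equiv.Perm (Fin r) :=
  ((List.range t).map (fun c => colProd r M (c + 1))).prod

section Blocks

variable {r N : ℕ}

lemma ptil_mono (lam : Fin N → ℕ) : Monotone (ptil lam) := fun _ _ hij =>
  sum_le_sum fun l _ => by split_ifs <;> omega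

lemma ptil_of_le (lam : Fin N → ℕ) {j : ℕ} (hj : N ≤ j) : ptil lam j = ∑ l, lam l :=
  sum_congr rfl fun l _ => if_pos (by omega)

lemma ptil_add (lam lam' : Fin N → ℕ) (j : ℕ) :
    ptil (lam + lam') j = ptil lam j + ptil lam' j := by
  simp only [ptil, Pi.add_apply, ← sum_add_distrib]
  exact sum_congr rfl fun l _ => by split_ifs <;> simp

lemma ptil_single (a : Fin N) (c j : ℕ) :
    ptil (Pi.single a c) j = if a.val < j then c else 0 := by
  rw [ptil, sum_eq_single a (fun l _ hl => by simp [hl]) (by simp)]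
  simp

lemma ptil_zero (lam : Fin N → ℕ) : ptil lam 0 = 0 := by
  simp [ptil]

lemma blockOf_eq_of_le_of_lt {lam : Fin N → ℕ} {x : Fin r} {i : ℕ} (hi : i < N)
    (hle : ptil lam i ≤ x) (hlt : x < ptil lam (i + 1)) : blockOf lam x = i := by
  rw [blockOf, ← card_range i]
  congr 1
  ext j
  simp only [mem_filter, mem_range]
  constructor
  · rintro ⟨-, hj⟩
    by_contra! hij
    have := ptil_mono lam (show i + 1 ≤ j + 1 by omega)
    omega
  · intro hj
    exact ⟨by omega, (ptil_mono lam (by omega)).trans hle⟩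

lemma exists_ptil_le_lt {lam : Fin N → ℕ} (hs : ptil lam N = r) (x : Fin r) :
    ∃ i < N, ptil lam i ≤ x ∧ x < ptil lam (i + 1) := by
  classical
  have hx := x.isLt
  have hex : ∃ i, x < ptil lam (i + 1) :=
    ⟨N, by have := ptil_mono lam (show N ≤ N + 1 by omega); omega⟩
  have hle : ptil lam (Nat.find hex) ≤ x := by
    rcases Nat.eq_zero_or_pos (Nat.find hex) with h0 | hpos
    · simp [h0, ptil_zero]
    · obtain ⟨m, hm⟩ := Nat.exists_eq_add_one_of_ne_zero hpos.ne'
      have := Nat.find_min hex (show m < Nat.find hex by omega)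
      rw [hm]
      omega
  refine ⟨Nat.find hex, ?_, hle, Nat.find_spec hex⟩
  by_contra! hN
  have := ptil_mono lam hN
  omega

lemma blockOf_eq_iff {lam : Fin N → ℕ} (hs : ptil lam N = r) {x : Fin r} {i : ℕ} :
    blockOf lam x = i ↔ ptil lam i ≤ x ∧ x < ptil lam (i + 1) := by
  obtain ⟨k, hk, hle, hlt⟩ := exists_ptil_le_lt hs x
  rw [blockOf_eq_of_le_of_lt hk hle hlt]
  refine ⟨by rintro rfl; exact ⟨hle, hlt⟩, fun ⟨hle', hlt'⟩ => ?_⟩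
  by_contra hki
  rcases Nat.lt_or_gt_of_ne hki with hki | hki
  · exact absurd ((ptil_mono lam hki).trans hle') (not_le.2 hlt)
  · exact absurd ((ptil_mono lam hki).trans hle) (not_le.2 hlt')

lemma blockOf_lt {lam : Fin N → ℕ} (hs : ptil lam N = r) (x : Fin r) : blockOf lam x < N := by
  obtain ⟨i, hi, hle, hlt⟩ := exists_ptil_le_lt hs x
  rwa [blockOf_eq_of_le_of_lt hi hle hlt]

lemma mem_blockSet_iff {lam : Fin N → ℕ} (hs : ptil lam N = r) {x : Fin r} {i : ℕ} :
    x ∈ blockSet r lam (i + 1) ↔ blockOf lam x = i := by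
  simp [blockSet, blockOf_eq_iff hs]

lemma swap_mem_young {lam : Fin N → ℕ} {x y : Fin r} (hxy : blockOf lam x = blockOf lam y) :
    swap x y ∈ young r lam := fun z => by
  rcases eq_or_ne z x with rfl | hzx
  · simp [hxy]
  rcases eq_or_ne z y with rfl | hzy
  · simp [hxy]
  · rw [swap_apply_of_ne_of_ne hzx hzy]

end Blocks

section BlockMatrix

variable {r N : ℕ}

/-- The intersection matrix `(|N_i^λ ∩ w(N_j^μ)|)_{i,j}` of `w`, with 0-based block indices. -/
def blockMatrix (lam mu : Fin N → ℕ) (w : Perm (Fin r)) : Fin N → Fin N → ℕ :=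
  fun i j => #{x | blockOf lam (w x) = i ∧ blockOf mu x = j}

lemma blockMatrix_mul_mul {lam mu : Fin N → ℕ} {x z : Perm (Fin r)} (hx : x ∈ young r lam)
    (hz : z ∈ young r mu) (w : Perm (Fin r)) :
    blockMatrix lam mu (x * w * z) = blockMatrix lam mu w := by
  funext i j
  refine card_equiv z fun y => ?_
  have hx' : blockOf lam (x (w (z y))) = blockOf lam (w (z y)) := hx _
  simp only [Finset.mem_filter, Finset.mem_univ, true_and]
  simp [hx', hz y]

lemma blockMatrix_eq_of_isDM {A : Fin N → Fin N → ℕ} {d : Perm (Fin r)}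
    (hrow : ptil (rowSums A) N = r) (hcol : ptil (colSums A) N = r) (hd : isDM r A d) :
    blockMatrix (rowSums A) (colSums A) d = A := by
  funext i j
  rw [← hd.2 i j]
  refine card_equiv d fun y => ?_
  simp [mem_blockSet_iff hrow, mem_blockSet_iff hcol]

lemma exists_perm_comp_eq {α β : Type*} [Fintype α] [DecidableEq β] {f g : α → β}
    (hfg : ∀ c, #{x | f x = c} = #{x | g x = c}) : ∃ σ : Perm α, ∀ x, g (σ x) = f x :=
  ⟨ofFiberEquiv fun c => Fintype.equivOfCardEq (by simpa [Fintype.card_subtype] using hfg c),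
    ofFiberEquiv_map _⟩

lemma mem_dcoset_iff {lam mu : Fin N → ℕ} (hlam : ptil lam N = r) (hmu : ptil mu N = r)
    {d w : Perm (Fin r)} :
    w ∈ dcoset r lam mu d ↔ blockMatrix lam mu w = blockMatrix lam mu d := by
  refine ⟨fun ⟨x, hx, z, hz, hw⟩ => hw ▸ blockMatrix_mul_mul hx hz d, fun hwd => ?_⟩
  let pos (v : Perm (Fin r)) (x : Fin r) : Fin N × Fin N :=
    (⟨blockOf lam (v x), blockOf_lt hlam _⟩, ⟨blockOf mu x, blockOf_lt hmu x⟩)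
  have hfib : ∀ c, #{x | pos w x = c} = #{x | pos d x = c} := by
    rintro ⟨i, j⟩
    simpa [pos, blockMatrix, Prod.ext_iff, Fin.ext_iff] using congrFun (congrFun hwd i) j
  obtain ⟨σ, hσ⟩ := exists_perm_comp_eq hfib
  simp only [pos, Prod.ext_iff, Fin.ext_iff] at hσ
  refine ⟨w * σ⁻¹ * d⁻¹, fun y => ?_, σ, fun x => (hσ x).2, by group⟩
  simpa using (hσ (σ⁻¹ (d⁻¹ y))).1.symm

end BlockMatrix

section MovedPoint

variable {r N : ℕ}

lemma ptil_eq_of_add_single {lam lam' : Fin N → ℕ} {a b : Fin N} (hab : a.val + 1 = b.val)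
    (hlam : lam' + Pi.single b 1 = lam + Pi.single a 1) (j : ℕ) :
    ptil lam' j = ptil lam j + if j = b.val then 1 else 0 := by
  have := congrArg (ptil · j) hlam
  simp only [ptil_add, ptil_single] at this
  split_ifs at this ⊢ <;> omega

lemma exists_blockOf_of_add_single {lam lam' : Fin N → ℕ} (hs : ptil lam N = r) {a b : Fin N}
    (hab : a.val + 1 = b.val) (hlam : lam' + Pi.single b 1 = lam + Pi.single a 1) :
    ∃ p : Fin r, blockOf lam' p = a ∧ blockOf lam p = b ∧
      ∀ y ≠ p, blockOf lam' y = blockOf lam y := by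
  have hptil := ptil_eq_of_add_single hab hlam
  have hb : ptil lam b < ptil lam (b + 1) := by
    have h1 := hptil b
    have h2 := hptil (b + 1)
    have h3 := ptil_mono lam' (by omega : b.val ≤ b.val + 1)
    simp at h1 h2
    omega
  have hbN : ptil lam (b + 1) ≤ r := hs ▸ ptil_mono lam b.isLt
  refine ⟨⟨ptil lam b, by omega⟩, ?_, blockOf_eq_of_le_of_lt b.isLt le_rfl hb,
    fun y hy => ?_⟩
  · refine blockOf_eq_of_le_of_lt a.isLt ?_ ?_
    · rw [hptil, if_neg (by omega)]
      exact ptil_mono lam (by omega)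
    · rw [hab, hptil, if_pos rfl]
      exact Nat.lt_succ_self _
  · have hy' : y.val ≠ ptil lam b := fun h => hy (Fin.ext h)
    refine congrArg card (filter_congr fun i _ => ?_)
    rw [hptil]
    split_ifs with hi
    · rw [hi]
      omega
    · rw [add_zero]

lemma card_filter_add_ite_eq {α : Type*} [Fintype α] [DecidableEq α] {P Q : α → Prop}
    [DecidablePred P] [DecidablePred Q] (q : α) (hPQ : ∀ x ≠ q, P x ↔ Q x) :
    #{x | P x} + (if Q q then 1 else 0) = #{x | Q x} + (if P q then 1 else 0) := by
  rw [card_filter, card_filter, ← add_sum_erase _ _ (mem_univ q),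
    ← add_sum_erase _ _ (mem_univ q),
    sum_congr rfl fun x hx => if_congr (hPQ x (ne_of_mem_erase hx)) rfl rfl]
  ring

lemma single_single_apply (a k i j : Fin N) :
    (Pi.single a (Pi.single k 1) : Fin N → Fin N → ℕ) i j =
      if i = a ∧ j = k then 1 else 0 := by
  by_cases hi : i = a <;> simp [hi, Pi.single_apply]

lemma blockMatrix_add_single {lam lam' mu : Fin N → ℕ} {p : Fin r} {a b k : Fin N}
    (hp : ∀ y ≠ p, blockOf lam' y = blockOf lam y) (ha : blockOf lam' p = a)
    (hb : blockOf lam p = b) (w : Perm (Fin r)) (hk : blockOf mu (w⁻¹ p) = k) :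
    blockMatrix lam' mu w + Pi.single b (Pi.single k 1) =
      blockMatrix lam mu w + Pi.single a (Pi.single k 1) := by
  funext i j
  have := card_filter_add_ite_eq (P := fun x => blockOf lam' (w x) = i ∧ blockOf mu x = j)
    (Q := fun x => blockOf lam (w x) = i ∧ blockOf mu x = j) (w⁻¹ p) fun x hx => by
      rw [hp (w x) (by rintro rfl; simp at hx)]
  have hwp : w (w⁻¹ p) = p := by simp
  simp only [hwp, ha, hb, hk, Fin.val_inj] at this
  simpa only [blockMatrix, Pi.add_apply, single_single_apply, @eq_comm (Fin N)] using this

end MovedPoint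

section ProdCoset

variable {r N : ℕ} {lam lam' mu : Fin N → ℕ} {p : Fin r} {a b : Fin N}
  {M : Fin N → Fin N → ℕ} {D : Fin N → Perm (Fin r)}

lemma mem_dcoset_of_blockMatrix_eq (hlam' : ptil lam' N = r) (hmu : ptil mu N = r)
    (hp : ∀ y ≠ p, blockOf lam' y = blockOf lam y) (ha : blockOf lam' p = a)
    (hb : blockOf lam p = b) (hab : a ≠ b)
    (hD : ∀ k, 1 ≤ M b k →
      blockMatrix lam' mu (D k) + Pi.single b (Pi.single k 1) = M + Pi.single a (Pi.single k 1))
    {u : Perm (Fin r)} (hu : blockMatrix lam mu u = M) {k : Fin N}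
    (hk : blockOf mu (u⁻¹ p) = k) : 1 ≤ M b k ∧ u ∈ dcoset r lam' mu (D k) := by
  have hshift := blockMatrix_add_single hp ha hb u hk
  rw [hu] at hshift
  have hMbk : 1 ≤ M b k := by
    have := congrFun (congrFun hshift b) k
    simp [hab.symm] at this
    omega
  exact ⟨hMbk, (mem_dcoset_iff hlam' hmu).2 (add_right_cancel (hshift.trans (hD k hMbk).symm))⟩

theorem dcoset_mul_dcoset_eq_biUnion (hlam' : ptil lam' N = r) (hmu : ptil mu N = r)
    (hp : ∀ y ≠ p, blockOf lam' y = blockOf lam y) (ha : blockOf lam' p = a)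
    (hb : blockOf lam p = b) (hab : a ≠ b) {d : Perm (Fin r)}
    (hd : blockMatrix lam mu d = M)
    (hD : ∀ k, 1 ≤ M b k →
      blockMatrix lam' mu (D k) + Pi.single b (Pi.single k 1) = M + Pi.single a (Pi.single k 1)) :
    {w | ∃ x ∈ dcoset r lam' lam 1, ∃ y ∈ dcoset r lam mu d, w = x * y} =
      ⋃ k ∈ {k | 1 ≤ M b k}, dcoset r lam' mu (D k) := by
  ext w
  simp only [Set.mem_ofPred_eq, Set.mem_iUnion, exists_prop]
  constructor
  · rintro ⟨_, ⟨x, hx, c, hc, rfl⟩, _, ⟨c', hc', z, hz, rfl⟩, rfl⟩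
    have hu : blockMatrix lam mu (c * c' * d) = M := by
      simpa [hd] using blockMatrix_mul_mul (mul_mem hc hc') (one_mem (young r mu)) d
    obtain ⟨hk, hud⟩ := mem_dcoset_of_blockMatrix_eq hlam' hmu hp ha hb hab hD hu
      (k := ⟨_, blockOf_lt hmu _⟩) rfl
    refine ⟨_, hk, (mem_dcoset_iff hlam' hmu).2 ?_⟩
    rw [show x * 1 * c * (c' * d * z) = x * (c * c' * d) * z by group,
      blockMatrix_mul_mul hx hz]
    exact (mem_dcoset_iff hlam' hmu).1 hud
  · rintro ⟨k, hk, hw⟩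
    obtain ⟨q, hqb, hqk⟩ : ∃ q, blockOf lam (d q) = b ∧ blockOf mu q = k := by
      have : 0 < blockMatrix lam mu d b k := hd ▸ hk
      obtain ⟨q, hq⟩ := card_pos.1 this
      exact ⟨q, by simpa using hq⟩
    have hswap : swap p (d q) ∈ young r lam := swap_mem_young (hb.trans hqb.symm)
    have hu : blockMatrix lam mu (swap p (d q) * d) = M := by
      simpa [hd] using blockMatrix_mul_mul hswap (one_mem (young r mu)) d
    obtain ⟨-, hud⟩ := mem_dcoset_of_blockMatrix_eq hlam' hmu hp ha hb hab hD hu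
      (by simpa [Perm.mul_apply] using hqk)
    obtain ⟨x, hx, z, hz, rfl⟩ := (mem_dcoset_iff hlam' hmu).2
      (((mem_dcoset_iff hlam' hmu).1 hw).trans ((mem_dcoset_iff hlam' hmu).1 hud).symm)
    exact ⟨x, ⟨x, hx, 1, one_mem _, by group⟩, _, ⟨_, hswap, z, hz, rfl⟩, by group⟩

lemma disjoint_dcoset (hlam' : ptil lam' N = r) (hmu : ptil mu N = r) (hab : a ≠ b)
    (hD : ∀ k, 1 ≤ M b k →
      blockMatrix lam' mu (D k) + Pi.single b (Pi.single k 1) = M + Pi.single a (Pi.single k 1))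
    {k k' : Fin N} (hkk' : k ≠ k') (hk : 1 ≤ M b k) (hk' : 1 ≤ M b k') :
    Disjoint (dcoset r lam' mu (D k)) (dcoset r lam' mu (D k')) := by
  refine Set.disjoint_left.2 fun w hw hw' => ?_
  have hkk := congrFun (congrFun (((mem_dcoset_iff hlam' hmu).1 hw).symm.trans
    ((mem_dcoset_iff hlam' hmu).1 hw')) a) k
  have h1 := congrFun (congrFun (hD k hk) a) k
  have h2 := congrFun (congrFun (hD k' hk') a) k
  simp [hab, hkk'] at h1 h2
  omega

end ProdCoset

section Sums

variable {N : ℕ}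

lemma add_single_eq_of_eq_ite {lam lam' : Fin N → ℕ} {a b : Fin N} (hab : a ≠ b)
    (hb : 1 ≤ lam b) (hlam' : ∀ i : Fin N, lam' i =
      if i.val = a.val then lam i + 1 else if i.val = b.val then lam i - 1 else lam i) :
    lam' + Pi.single b 1 = lam + Pi.single a 1 := by
  funext i
  rw [Pi.add_apply, Pi.add_apply, hlam']
  rcases eq_or_ne i a with rfl | hia
  · simp [hab]
  rcases eq_or_ne i b with rfl | hib
  · simp [Fin.val_inj, hia]
    omega
  · simp [Fin.val_inj, hia, hib]

lemma add_single_single_eq_of_eq_ite {A B : Fin N → Fin N → ℕ} {a b k : Fin N} (hab : a ≠ b)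
    (hb : 1 ≤ A b k) (hB : ∀ i j : Fin N, B i j =
      if i.val = a.val ∧ j = k then A i j + 1
      else if i.val = b.val ∧ j = k then A i j - 1 else A i j) :
    B + Pi.single b (Pi.single k 1) = A + Pi.single a (Pi.single k 1) := by
  funext i j
  simp only [Pi.add_apply, single_single_apply]
  rcases eq_or_ne j k with rfl | hjk
  · simpa [Pi.single_apply] using
      congrFun (add_single_eq_of_eq_ite (lam := fun i => A i j) (lam' := fun i => B i j)
        hab hb fun i => by simp [hB]) i
  · simp [hB, hjk]

lemma rowSums_add_single (A : Fin N → Fin N → ℕ) (a k : Fin N) :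
    rowSums (A + Pi.single a (Pi.single k 1)) = rowSums A + Pi.single a 1 := by
  funext i
  rcases eq_or_ne i a with rfl | hi
  · simp [rowSums, sum_add_distrib]
  · simp [rowSums, hi]

lemma colSums_add_single (A : Fin N → Fin N → ℕ) (a k : Fin N) :
    colSums (A + Pi.single a (Pi.single k 1)) = colSums A + Pi.single k 1 := by
  funext j
  rcases eq_or_ne j k with rfl | hj
  · simp [colSums, sum_add_distrib, single_single_apply]
  · simp [colSums, single_single_apply, hj]

lemma sums_of_add_single {A B : Fin N → Fin N → ℕ} {a b k : Fin N}
    (hAB : A + Pi.single b (Pi.single k 1) = B + Pi.single a (Pi.single k 1)) :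
    rowSums A + Pi.single b 1 = rowSums B + Pi.single a 1 ∧ colSums A = colSums B := by
  refine ⟨by rw [← rowSums_add_single, hAB, rowSums_add_single],
    add_right_cancel (b := Pi.single k 1) ?_⟩
  rw [← colSums_add_single A b k, hAB, colSums_add_single]

end Sums

theorem stmt0_general (N r : ℕ) (M : Fin N → Fin N → ℕ)
    (hMr : ∑ i, ∑ j, M i j = r)
    (h : ℕ) (hh : h + 1 < N)
    (hrow : 1 ≤ rowSums M ⟨h + 1, hh⟩)
    (lamP : Fin N → ℕ)
    (hlamP : ∀ i : Fin N, lamP i =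
      if i.val = h then rowSums M i + 1
      else if i.val = h + 1 then rowSums M i - 1 else rowSums M i)
    (MP : Fin N → (Fin N → Fin N → ℕ))
    (hMP : ∀ k : Fin N, ∀ i j : Fin N, MP k i j =
      if i.val = h ∧ j = k then M i j + 1
      else if i.val = h + 1 ∧ j = k then M i j - 1 else M i j)
    (dM : Equiv.Perm (Fin r)) (hdM : isDM r M dM)
    (dP : Fin N → Equiv.Perm (Fin r))
    (hdP : ∀ k : Fin N, 1 ≤ M ⟨h + 1, hh⟩ k → isDM r (MP k) (dP k)) :
    ({w : Equiv.Perm (Fin r) |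
        ∃ x ∈ dcoset r lamP (rowSums M) 1, ∃ y ∈ dcoset r (rowSums M) (colSums M) dM,
          w = x * y}
      = ⋃ k ∈ {k : Fin N | 1 ≤ M ⟨h + 1, hh⟩ k}, dcoset r lamP (colSums M) (dP k)) ∧
    ∀ k k' : Fin N, k ≠ k' → 1 ≤ M ⟨h + 1, hh⟩ k → 1 ≤ M ⟨h + 1, hh⟩ k' →
      Disjoint (dcoset r lamP (colSums M) (dP k)) (dcoset r lamP (colSums M) (dP k')) := by
  have hab : (⟨h, by omega⟩ : Fin N) ≠ ⟨h + 1, hh⟩ := by simp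
  have hlam : ptil (rowSums M) N = r := (ptil_of_le _ le_rfl).trans hMr
  have hmu : ptil (colSums M) N = r := ((ptil_of_le _ le_rfl).trans sum_comm).trans hMr
  have hlamP' := add_single_eq_of_eq_ite hab hrow hlamP
  have hMP' k (hk : 1 ≤ M ⟨h + 1, hh⟩ k) := add_single_single_eq_of_eq_ite hab hk (hMP k)
  have hlamP_sum : ptil lamP N = r := by
    rw [ptil_eq_of_add_single rfl hlamP', if_neg hh.ne', hlam, add_zero]
  obtain ⟨p, hpa, hpb, hp⟩ := exists_blockOf_of_add_single hlam rfl hlamP'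
  have hD k (hk : 1 ≤ M ⟨h + 1, hh⟩ k) :
      blockMatrix lamP (colSums M) (dP k) + Pi.single ⟨h + 1, hh⟩ (Pi.single k 1) =
        M + Pi.single ⟨h, by omega⟩ (Pi.single k 1) := by
    obtain ⟨hrowP, hcolP⟩ := sums_of_add_single (hMP' k hk)
    replace hrowP : rowSums (MP k) = lamP := add_right_cancel (hrowP.trans hlamP'.symm)
    rw [← hrowP, ← hcolP,
      blockMatrix_eq_of_isDM (hrowP ▸ hlamP_sum) (hcolP ▸ hmu) (hdP k hk), hMP' k hk]
  exact ⟨dcoset_mul_dcoset_eq_biUnion hlamP_sum hmu hp hpa hpb hab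
      (blockMatrix_eq_of_isDM hlam hmu hdM) hD,
    fun k k' hkk' hk hk' => disjoint_dcoset hlamP_sum hmu hab hD hkk' hk hk'⟩

/-- Theorem `prod coset`, first decomposition.
Let `M ∈ M(N,r)`, `λ = ro M`, `μ = co M`.  For a fixed `h` (here 0-based: rows `h` and
`h+1` of `M` correspond to the 1-based rows `h+1`, `h+2`, i.e. the paper's `h, h+1`) with
`λ_{h+1} ≥ 1`, set `λ⁺ = λ + e_h - e_{h+1}`.  Then
`(W_{λ⁺} · 1 · W_λ)(W_λ d_M W_μ) = ⋃_{k, m_{h+1,k} ≥ 1} W_{λ⁺} d_{M⁺_{h,k}} W_μ`,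
a disjoint union. -/
theorem stmt0 (N r : ℕ) (hN : 2 ≤ N) (M : Fin N → Fin N → ℕ)
    (hMr : ∑ i, ∑ j, M i j = r)
    (h : ℕ) (hh : h + 1 < N)
    (hrow : 1 ≤ rowSums M ⟨h + 1, hh⟩)
    (lamP : Fin N → ℕ)
    (hlamP : ∀ i : Fin N, lamP i =
      if i.val = h then rowSums M i + 1
      else if i.val = h + 1 then rowSums M i - 1 else rowSums M i)
    (MP : Fin N → (Fin N → Fin N → ℕ))
    (hMP : ∀ k : Fin N, ∀ i j : Fin N, MP k i j =
      if i.val = h ∧ j = k then M i j + 1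
      else if i.val = h + 1 ∧ j = k then M i j - 1 else M i j)
    (dM : Equiv.Perm (Fin r)) (hdM : isDM r M dM)
    (dP : Fin N → Equiv.Perm (Fin r))
    (hdP : ∀ k : Fin N, 1 ≤ M ⟨h + 1, hh⟩ k → isDM r (MP k) (dP k)) :
    ({w : Equiv.Perm (Fin r) |
        ∃ x ∈ dcoset r lamP (rowSums M) 1, ∃ y ∈ dcoset r (rowSums M) (colSums M) dM,
          w = x * y}
      = ⋃ k ∈ {k : Fin N | 1 ≤ M ⟨h + 1, hh⟩ k}, dcoset r lamP (colSums M) (dP k)) ∧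
    ∀ k k' : Fin N, k ≠ k' → 1 ≤ M ⟨h + 1, hh⟩ k → 1 ≤ M ⟨h + 1, hh⟩ k' →
      Disjoint (dcoset r lamP (colSums M) (dP k)) (dcoset r lamP (colSums M) (dP k')) :=
  stmt0_general N r M hMr h hh hrow lamP hlamP MP hMP dM hdM dP hdP
end

section
/- For any integers t ≥ 1 and 0 < k ≤ i < h_1 < h_2 < ⋯ < h_t < r, the following identity holds in W: s_i · (s_{h_1} s_{h_1−1} ⋯ s_k)(s_{h_2} s_{h_2−1} ⋯ s_{k+1}) ⋯ (s_{h_t} s_{h_t−1} ⋯ s_{k+t−1}) = (s_{h_1} s_{h_1−1} ⋯ s_k)(s_{h_2} s_{h_2−1} ⋯ s_{k+1}) ⋯ (s_{h_t} s_{h_t−1} ⋯ s_{k+t−1}) · s_{i+t}. -/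
open Equiv Finset

lemma descProd_succ (r b n : ℕ) :
    descProd r b (n + 1) = descProd r b n * sT r (b - n) := by
  simp [descProd, List.range_succ]

lemma descProd_left (r b n : ℕ) :
    descProd r b (n + 1) = sT r b * descProd r (b - 1) n := by
  unfold descProd
  rw [List.range_succ_eq_map, List.map_cons, List.prod_cons, List.map_map]
  have he : ((fun t => sT r (b - t)) ∘ Nat.succ) = (fun t => sT r (b - 1 - t)) := by
    funext t; simp only [Function.comp]; congr 1; omega
  rw [he, Nat.sub_zero]

lemma fin_mk_ne {r a b : ℕ} (ha : a < r) (hb : b < r) (h : a ≠ b) :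
    (⟨a, ha⟩ : Fin r) ≠ ⟨b, hb⟩ :=
  fun hc => h (congrArg Fin.val hc)

lemma swap_braid {α : Type*} [DecidableEq α] (a b c : α) (hab : a ≠ b) (hbc : b ≠ c)
    (hac : a ≠ c) :
    Equiv.swap a b * Equiv.swap b c * Equiv.swap a b
      = Equiv.swap b c * Equiv.swap a b * Equiv.swap b c := by
  have h1 : Equiv.swap a b * Equiv.swap b c * Equiv.swap a b
      = Equiv.swap (Equiv.swap a b b) (Equiv.swap a b c) := by
    rw [Equiv.swap_apply_apply, Equiv.swap_inv]
  have h2 : Equiv.swap b c * Equiv.swap a b * Equiv.swap b c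
      = Equiv.swap (Equiv.swap b c a) (Equiv.swap b c b) := by
    rw [Equiv.swap_apply_apply, Equiv.swap_inv]
  rw [h1, h2, Equiv.swap_apply_right, Equiv.swap_apply_of_ne_of_ne hac.symm hbc.symm,
    Equiv.swap_apply_of_ne_of_ne hab hac, Equiv.swap_apply_left]

lemma sT_comm (r i j : ℕ) (hi : 1 ≤ i) (hij : i + 1 < j) (hj : j < r) :
    sT r i * sT r j = sT r j * sT r i := by
  rw [sT, sT, dif_pos ⟨hi, by omega⟩, dif_pos ⟨by omega, hj⟩,
    Equiv.mul_swap_eq_swap_mul,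
    Equiv.swap_apply_of_ne_of_ne (fin_mk_ne _ _ (by omega)) (fin_mk_ne _ _ (by omega)),
    Equiv.swap_apply_of_ne_of_ne (fin_mk_ne _ _ (by omega)) (fin_mk_ne _ _ (by omega))]

lemma sT_braid (r i : ℕ) (hi : 1 ≤ i) (hir : i + 1 < r) :
    sT r i * sT r (i + 1) * sT r i = sT r (i + 1) * sT r i * sT r (i + 1) := by
  rw [sT, sT, dif_pos ⟨hi, by omega⟩, dif_pos ⟨by omega, hir⟩]
  have hb : (⟨i + 1 - 1, by omega⟩ : Fin r) = ⟨i, by omega⟩ := rfl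
  rw [hb]
  exact swap_braid _ _ _ (fin_mk_ne _ _ (by omega)) (fin_mk_ne _ _ (by omega))
    (fin_mk_ne _ _ (by omega))

lemma descProd_right_rec (r b k : ℕ) (hkb : k < b) :
    descProd r b (b - k + 1) = descProd r b (b - (k + 1) + 1) * sT r k := by
  have h1 := descProd_succ r b (b - k)
  rw [show b - (b - k) = k by omega] at h1
  rw [show b - (k + 1) + 1 = b - k by omega]
  exact h1

lemma sT_mul_descProd_base (r k : ℕ) (hk : 1 ≤ k) :
    ∀ b, k < b → b < r →
      sT r k * descProd r b (b - k + 1) = descProd r b (b - k + 1) * sT r (k + 1) := by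
  intro b
  induction b with
  | zero => omega
  | succ m ih =>
    intro hkb hbr
    rcases eq_or_lt_of_le (by omega : k ≤ m) with hkm | hkm
    · subst hkm
      have h2 : descProd r (k + 1) (k + 1 - k + 1) = sT r (k + 1) * sT r k := by
        rw [show k + 1 - k + 1 = 2 by omega]
        show descProd r (k + 1) (1 + 1) = _
        rw [descProd_succ, descProd_succ]
        simp only [descProd, List.range_zero, List.map_nil, List.prod_nil, one_mul]
        rw [show k + 1 - 0 = k + 1 by omega, show k + 1 - 1 = k by omega]
      rw [h2, ← mul_assoc]
      exact sT_braid r k hk (by omega)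
    · have hleft : descProd r (m + 1) (m + 1 - k + 1) = sT r (m + 1) * descProd r m (m - k + 1) := by
        have := descProd_left r (m + 1) (m - k + 1)
        rw [show m - k + 1 + 1 = m + 1 - k + 1 by omega] at this
        rw [this, Nat.add_sub_cancel]
      rw [hleft, ← mul_assoc, sT_comm r k (m + 1) hk (by omega) hbr, mul_assoc,
        ih hkm (by omega), ← mul_assoc]

lemma sT_mul_descProd (r b : ℕ) (hbr : b < r) :
    ∀ d k i, 1 ≤ k → k ≤ i → i - k = d → i < b →
      sT r i * descProd r b (b - k + 1) = descProd r b (b - k + 1) * sT r (i + 1) := by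
  intro d
  induction d with
  | zero =>
    intro k i hk hki hd hib
    have : i = k := by omega
    subst this
    exact sT_mul_descProd_base r i hk b hib hbr
  | succ d ih =>
    intro k i hk hki hd hib
    rw [descProd_right_rec r b k (by omega), ← mul_assoc,
      ih (k + 1) i (by omega) (by omega) (by omega) hib, mul_assoc,
      ← sT_comm r k (i + 1) hk (by omega) (by omega), ← mul_assoc]

/-- Lemma `reflection`(1), iterated form.  For `t ≥ 1`,
`0 < k ≤ i < h_1 < h_2 < ⋯ < h_t < r` (here `h j` for `0 ≤ j < t` lists `h_1, …, h_t`):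
`s_i · (s_{h_1} ⋯ s_k)(s_{h_2} ⋯ s_{k+1}) ⋯ (s_{h_t} ⋯ s_{k+t-1})
  = (s_{h_1} ⋯ s_k)(s_{h_2} ⋯ s_{k+1}) ⋯ (s_{h_t} ⋯ s_{k+t-1}) · s_{i+t}`. -/
theorem stmt5 (r t k i : ℕ) (h : ℕ → ℕ) (ht : 1 ≤ t)
    (hk : 0 < k) (hki : k ≤ i) (hih : i < h 0)
    (hmono : ∀ j1 j2, j1 < j2 → j2 < t → h j1 < h j2)
    (hhr : h (t - 1) < r) :
    sT r i * ((List.range t).map (fun j => descProd r (h j) (h j - (k + j) + 1))).prod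
      = ((List.range t).map (fun j => descProd r (h j) (h j - (k + j) + 1))).prod
          * sT r (i + t) := by
  induction t generalizing k i h with
  | zero => omega
  | succ t ih =>
    have hsplit : (List.range (t + 1)).map (fun j => descProd r (h j) (h j - (k + j) + 1))
        = descProd r (h 0) (h 0 - k + 1) ::
          (List.range t).map (fun j => descProd r (h (j + 1)) (h (j + 1) - ((k + 1) + j) + 1)) := by
      rw [List.range_succ_eq_map]
      simp only [List.map_cons, List.map_map]
      congr 1
      apply List.map_congr_left
      intro j _
      simp only [Function.comp]
      rw [show k + (j + 1) = (k + 1) + j from by omega]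
    rw [hsplit]
    simp only [List.prod_cons]
    have hh0r : h 0 < r := by
      have hhr' : h t < r := by simpa using hhr
      rcases Nat.eq_zero_or_pos t with h1 | h1
      · rw [← h1]; exact hhr'
      · exact lt_trans (hmono 0 t (by omega) (by omega)) hhr'
    have hbase := sT_mul_descProd r (h 0) hh0r (i - k) k i hk hki rfl hih
    rcases Nat.eq_zero_or_pos t with rfl | htpos
    · simpa using hbase
    · have ihapp := ih (k + 1) (i + 1) (fun j => h (j + 1)) htpos (by omega) (by omega)
        (by show i + 1 < h 1; have := hmono 0 1 (by omega) (by omega); omega)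
        (fun j1 j2 hj hjt => hmono (j1 + 1) (j2 + 1) (by omega) (by omega))
        (by show h (t - 1 + 1) < r
            rw [show t - 1 + 1 = t by omega]
            simpa using hhr)
      set A := descProd r (h 0) (h 0 - k + 1) with hA
      set B := ((List.range t).map
        (fun j => descProd r (h (j + 1)) (h (j + 1) - ((k + 1) + j) + 1))).prod with hB
      have he : i + (t + 1) = i + 1 + t := by omega
      rw [he, ← mul_assoc, hbase, mul_assoc, ihapp, ← mul_assoc]
end

section
/- Let N ≥ 2, M = (m_{i,j}) ∈ M(N,r) with λ = ro(M), and fix 1 ≤ h ≤ N, 1 < k ≤ N, and an integer x with 0 < x ≤ m_{h,k} and Σ_{j=1}^{k−1} m_{h,j} + x < λ_h. Then for every t with 1 ≤ t ≤ k−1: s_{λ̃_{h−1} + Σ_{j=1}^{k−1} m_{h,j} + x} · Π_t = Π_t · s_{σ_{h−1,t+1} + Σ_{j=t+1}^{k−1} m_{h,j} + x}, where Π_t = (w_{2,1} w_{3,1} ⋯ w_{N,1})(w_{2,2} ⋯ w_{N,2}) ⋯ (w_{2,t} ⋯ w_{N,t}). -/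
open Equiv Finset

/-! ### Auxiliary lemmas -/

section Aux

lemma sT_eq_swap {r a : ℕ} (h1 : 1 ≤ a) (h2 : a < r) :
    sT r a = Equiv.swap ⟨a - 1, by omega⟩ ⟨a, h2⟩ := dif_pos ⟨h1, h2⟩

lemma sT_out {r a : ℕ} (h : ¬(1 ≤ a ∧ a < r)) : sT r a = 1 := dif_neg h

lemma descProd_apply (r b n : ℕ) (hb : b < r) (hn : n ≤ b) (p : Fin r) :
    descProd r b n p =
      if p.val = b - n then (⟨b, hb⟩ : Fin r)
      else if b - n < p.val ∧ p.val ≤ b then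
        ⟨p.val - 1, Nat.lt_of_le_of_lt (Nat.sub_le _ _) p.isLt⟩
      else p := by
  induction n generalizing p with
  | zero =>
    simp only [descProd, List.range_zero, List.map_nil, List.prod_nil,
      Equiv.Perm.coe_one, id_eq, Nat.sub_zero]
    split_ifs with h1 h2
    · exact Fin.ext h1
    · omega
    · rfl
  | succ n ih =>
    have hp := p.isLt
    have ih' := ih (show n ≤ b by omega)
    rw [descProd_succ, Equiv.Perm.mul_apply,
      sT_eq_swap (show 1 ≤ b - n by omega) (show b - n < r by omega),
      Equiv.swap_apply_def]
    simp only [ih', Fin.ext_iff, apply_ite Fin.val]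
    split_ifs <;> omega

lemma sT_mul_descProd_inner (r b n a : ℕ) (hb : b < r) (hn : n ≤ b)
    (h1 : b - n < a) (h2 : a < b) :
    sT r a * descProd r b n = descProd r b n * sT r (a + 1) := by
  ext p
  have hp := p.isLt
  rw [sT_eq_swap (show 1 ≤ a by omega) (show a < r by omega),
    sT_eq_swap (show 1 ≤ a + 1 by omega) (show a + 1 < r by omega)]
  simp only [Equiv.Perm.mul_apply, Equiv.swap_apply_def,
    descProd_apply r b n hb hn, Fin.ext_iff, apply_ite Fin.val]
  split_ifs <;> omega

lemma sT_mul_descProd_fix (r b n a : ℕ) (hb : b < r) (hn : n ≤ b) (ha : b + 2 ≤ a) :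
    sT r a * descProd r b n = descProd r b n * sT r a := by
  by_cases hr : a < r
  · ext p
    have hp := p.isLt
    rw [sT_eq_swap (show 1 ≤ a by omega) hr]
    simp only [Equiv.Perm.mul_apply, Equiv.swap_apply_def,
      descProd_apply r b n hb hn, Fin.ext_iff, apply_ite Fin.val]
    split_ifs <;> omega
  · rw [sT_out (by omega)]
    simp

lemma pass_block_inner (r b n a : ℕ) (hn : n ≤ b) (h1 : b - n < a) (h2 : a < b) :
    ∀ m : ℕ, b + m ≤ r →
    sT r a * ((List.range m).map (fun x => descProd r (b + x) n)).prod
      = ((List.range m).map (fun x => descProd r (b + x) n)).prod * sT r (a + m) := by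
  intro m
  induction m with
  | zero => intro _; simp
  | succ m ih =>
    intro hm
    rw [List.range_succ, List.map_append, List.prod_append]
    simp only [List.map_cons, List.map_nil, List.prod_cons, List.prod_nil, mul_one]
    rw [← mul_assoc, ih (by omega), mul_assoc,
      sT_mul_descProd_inner r (b + m) n (a + m) (by omega) (by omega) (by omega) (by omega),
      ← mul_assoc, ← add_assoc]

lemma pass_block_fix (r b n a : ℕ) (hn : n ≤ b) :
    ∀ m : ℕ, b + m ≤ r → b + m + 1 ≤ a →
    sT r a * ((List.range m).map (fun x => descProd r (b + x) n)).prod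
      = ((List.range m).map (fun x => descProd r (b + x) n)).prod * sT r a := by
  intro m
  induction m with
  | zero => intro _ _; simp
  | succ m ih =>
    intro hm ha
    rw [List.range_succ, List.map_append, List.prod_append]
    simp only [List.map_cons, List.map_nil, List.prod_cons, List.prod_nil, mul_one]
    rw [← mul_assoc, ih (by omega) (by omega), mul_assoc,
      sT_mul_descProd_fix r (b + m) n a (by omega) (by omega) (by omega), ← mul_assoc]

variable {N : ℕ} (M : Fin N → Fin N → ℕ)

lemma pass_wE_inner (r i j a : ℕ)
    (hr : sigmaS M (i - 1) j + ent M i j ≤ r)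
    (hms : mtil M (i - 1) j ≤ sigmaS M (i - 1) j)
    (h1 : mtil M (i - 1) j < a) (h2 : a < sigmaS M (i - 1) j) :
    sT r a * wE r M i j = wE r M i j * sT r (a + ent M i j) := by
  unfold wE
  exact pass_block_inner r _ _ a (by omega) (by omega) h2 _ hr

lemma pass_wE_fix (r i j a : ℕ)
    (hr : sigmaS M (i - 1) j + ent M i j ≤ r)
    (ha : sigmaS M (i - 1) j + ent M i j + 1 ≤ a) :
    sT r a * wE r M i j = wE r M i j * sT r a := by
  unfold wE
  exact pass_block_fix r _ _ a (by omega) _ hr ha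

lemma sum_pairs_eq_r {r : ℕ} (hMr : ∑ i, ∑ j, M i j = r) :
    ∑ p : Fin N × Fin N, M p.1 p.2 = r := by
  rw [Fintype.sum_prod_type]; exact hMr

lemma sigmaS_le_r {r : ℕ} (hMr : ∑ i, ∑ j, M i j = r) (i j : ℕ) :
    sigmaS M i j ≤ r := by
  rw [← sum_pairs_eq_r M hMr]
  unfold sigmaS colPS
  rw [← Finset.sum_add_distrib]
  exact Finset.sum_le_sum (fun p _ => by split_ifs <;> omega)

lemma sigmaS_mono (i i' j : ℕ) (h : i ≤ i') : sigmaS M i j ≤ sigmaS M i' j :=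
  Nat.add_le_add_left (Finset.sum_le_sum (fun p _ => by split_ifs <;> omega)) _

lemma mtil_mono (i i' j : ℕ) (h : i ≤ i') : mtil M i j ≤ mtil M i' j :=
  Nat.add_le_add_left (Finset.sum_le_sum (fun p _ => by split_ifs <;> omega)) _

lemma mtil_le_sigmaS (i j : ℕ) : mtil M i j ≤ sigmaS M i j :=
  Nat.add_le_add_left (Finset.sum_le_sum (fun p _ => by split_ifs <;> omega)) _

lemma sigmaS_step_eq (i j : ℕ) (hi1 : 1 ≤ i) :
    sigmaS M i j = sigmaS M (i - 1) j
      + ∑ p : Fin N × Fin N, if p.1.val + 1 = i ∧ j ≤ p.2.val + 1 then M p.1 p.2 else 0 := by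
  unfold sigmaS
  rw [add_assoc]
  congr 1
  rw [← Finset.sum_add_distrib]
  exact Finset.sum_congr rfl (fun p _ => by split_ifs <;> omega)

lemma ent_eq (i j : ℕ) (h1 : 1 ≤ i) (h2 : i ≤ N) (h3 : 1 ≤ j) (h4 : j ≤ N) :
    ent M i j = M ⟨i - 1, by omega⟩ ⟨j - 1, by omega⟩ := dif_pos ⟨h1, h2, h3, h4⟩

lemma sum_pair_single (i j : ℕ) (h1 : 1 ≤ i) (h2 : i ≤ N) (h3 : 1 ≤ j) (h4 : j ≤ N) :
    ∑ p : Fin N × Fin N, (if p.1.val + 1 = i ∧ p.2.val + 1 = j then M p.1 p.2 else 0)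
      = ent M i j := by
  rw [Finset.sum_eq_single ((⟨⟨i - 1, by omega⟩, ⟨j - 1, by omega⟩⟩ : Fin N × Fin N))]
  · split_ifs with hc
    · rw [ent_eq M i j h1 h2 h3 h4]
    · exact absurd ⟨show i - 1 + 1 = i by omega, show j - 1 + 1 = j by omega⟩ hc
  · intro p _ hne
    rw [if_neg]
    rintro ⟨e1, e2⟩
    exact hne (Prod.ext (Fin.ext (show (p.1 : ℕ) = i - 1 by omega))
      (Fin.ext (show (p.2 : ℕ) = j - 1 by omega)))
  · intro hmem
    exact absurd (Finset.mem_univ _) hmem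


lemma sigmaS_step_le (i j : ℕ) (hi1 : 1 ≤ i) (hiN : i ≤ N) (hj1 : 1 ≤ j) (hjN : j ≤ N) :
    sigmaS M (i - 1) j + ent M i j ≤ sigmaS M i j := by
  rw [sigmaS_step_eq M i j hi1]
  have hle : ent M i j
      ≤ ∑ p : Fin N × Fin N, if p.1.val + 1 = i ∧ j ≤ p.2.val + 1 then M p.1 p.2 else 0 := by
    rw [← sum_pair_single M i j hi1 hiN hj1 hjN]
    exact Finset.sum_le_sum (fun p _ => by split_ifs <;> omega)
  omega

lemma mtil_step (i j : ℕ) (h1 : 1 ≤ i) (h2 : i ≤ N) (h3 : 1 ≤ j) (h4 : j ≤ N) :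
    mtil M i j = mtil M (i - 1) j + ent M i j := by
  unfold mtil
  rw [add_assoc]
  congr 1
  rw [← sum_pair_single M i j h1 h2 h3 h4, ← Finset.sum_add_distrib]
  exact Finset.sum_congr rfl (fun p _ => by split_ifs <;> omega)

lemma mtil_le_sigma_ent (h j : ℕ) (hh1 : 1 ≤ h) (hhN : h ≤ N) (hj1 : 1 ≤ j) (hjN : j ≤ N) :
    mtil M h j ≤ sigmaS M (h - 1) j + ent M h j := by
  rw [mtil_step M h j hh1 hhN hj1 hjN]
  exact Nat.add_le_add_right (mtil_le_sigmaS M _ j) _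

lemma sigma_mtil_swap (j h : ℕ) (hj1 : 1 ≤ j) (hjN : j ≤ N) (hh1 : 1 ≤ h) :
    ∀ n, h ≤ n → n ≤ N →
    sigmaS M h j + mtil M n j ≤ sigmaS M n j + mtil M h j := by
  intro n
  induction n with
  | zero => intro h1 _; omega
  | succ n ih =>
    intro hle hnN
    rcases Nat.eq_or_lt_of_le hle with heq | hlt
    · subst heq; omega
    · have h1 : h ≤ n := by omega
      have e1 : mtil M (n + 1) j = mtil M n j + ent M (n + 1) j := by
        have := mtil_step M (n + 1) j (by omega) hnN hj1 hjN
        simpa using this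
      have e2 : sigmaS M n j + ent M (n + 1) j ≤ sigmaS M (n + 1) j := by
        have := sigmaS_step_le M (n + 1) j (by omega) hnN hj1 hjN
        simpa using this
      have := ih h1 (by omega)
      omega

lemma colProd_partial_pass {r : ℕ} (hMr : ∑ i, ∑ j, M i j = r)
    (j h a : ℕ) (hh1 : 1 ≤ h) (hhN : h ≤ N) (hj1 : 1 ≤ j) (hjN : j ≤ N)
    (hyp1 : sigmaS M (h - 1) j + ent M h j + 1 ≤ a)
    (hyp2 : a + 1 ≤ sigmaS M h j) :
    ∀ n, n ≤ N - 1 →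
    sT r a * ((List.range n).map (fun t => wE r M (t + 2) j)).prod
      = ((List.range n).map (fun t => wE r M (t + 2) j)).prod
        * sT r (a + (mtil M (n + 1) j - mtil M h j)) := by
  intro n
  induction n with
  | zero =>
    intro _
    have e : mtil M 1 j - mtil M h j = 0 := by
      have := mtil_mono M 1 h j hh1
      omega
    simp [e]
  | succ n ih =>
    intro hn
    have h21 : n + 2 - 1 = n + 1 := by omega
    have hr1 : sigmaS M (n + 1) j + ent M (n + 2) j ≤ r := by
      have h1 := sigmaS_step_le M (n + 2) j (by omega) (by omega) hj1 hjN
      have h2 := sigmaS_le_r M hMr (n + 2) j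
      rw [h21] at h1
      omega
    rw [List.range_succ, List.map_append, List.prod_append]
    simp only [List.map_cons, List.map_nil, List.prod_cons, List.prod_nil, mul_one,
      show n + 1 + 1 = n + 2 from by omega]
    rw [← mul_assoc, ih (by omega), mul_assoc, mul_assoc]
    congr 1
    by_cases hcase : n + 2 ≤ h
    · have e0 : mtil M (n + 1) j - mtil M h j = 0 := by
        have := mtil_mono M (n + 1) h j (by omega)
        omega
      have e1 : mtil M (n + 2) j - mtil M h j = 0 := by
        have := mtil_mono M (n + 2) h j hcase
        omega
      rw [e0, e1]
      have hle : sigmaS M (n + 1) j + ent M (n + 2) j ≤ sigmaS M (h - 1) j + ent M h j := by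
        rcases Nat.eq_or_lt_of_le hcase with heq | hlt
        · rw [← heq, h21]
        · have l1 := sigmaS_step_le M (n + 2) j (by omega) (by omega) hj1 hjN
          have l2 := sigmaS_mono M (n + 2) (h - 1) j (by omega)
          rw [h21] at l1
          omega
      refine pass_wE_fix M r (n + 2) j (a + 0) ?_ ?_ <;> rw [h21] <;> omega
    · have hm1 : mtil M h j ≤ mtil M (n + 1) j := mtil_mono M h (n + 1) j (by omega)
      have hm2 : mtil M h j < a := by
        have := mtil_le_sigma_ent M h j hh1 hhN hj1 hjN
        omega
      have hs := sigma_mtil_swap M j h hj1 hjN hh1 (n + 1) (by omega) (by omega)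
      have hstep : mtil M (n + 2) j = mtil M (n + 1) j + ent M (n + 2) j := by
        have := mtil_step M (n + 2) j (by omega) (by omega) hj1 hjN
        rwa [h21] at this
      have key := pass_wE_inner M r (n + 2) j (a + (mtil M (n + 1) j - mtil M h j))
        (by rw [h21]; exact hr1) (by rw [h21]; exact mtil_le_sigmaS M (n + 1) j)
        (by rw [h21]; omega) (by rw [h21]; omega)
      rw [key, show a + (mtil M (n + 1) j - mtil M h j) + ent M (n + 2) j
          = a + (mtil M (n + 2) j - mtil M h j) from by omega]

lemma pass_colProd {r : ℕ} (hMr : ∑ i, ∑ j, M i j = r) (j h a : ℕ)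
    (hh1 : 1 ≤ h) (hhN : h ≤ N) (hj1 : 1 ≤ j) (hjN : j ≤ N)
    (hyp1 : sigmaS M (h - 1) j + ent M h j + 1 ≤ a)
    (hyp2 : a + 1 ≤ sigmaS M h j) :
    sT r a * colProd r M j
      = colProd r M j * sT r (a + (mtil M N j - mtil M h j)) := by
  have H := colProd_partial_pass M hMr j h a hh1 hhN hj1 hjN hyp1 hyp2 (N - 1) (le_refl _)
  have e : N - 1 + 1 = N := by omega
  rw [e] at H
  exact H

lemma piProd_succ (r c : ℕ) :
    piProd r M (c + 1) = piProd r M c * colProd r M (c + 1) := by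
  unfold piProd
  rw [List.range_succ, List.map_append, List.prod_append]
  simp

lemma entIcc (h a : ℕ) (hh1 : 1 ≤ h) (hhN : h ≤ N) (ha1 : 1 ≤ a) :
    ∀ b, b ≤ N →
    (∑ j ∈ Finset.Icc a b, ent M h j)
      = ∑ p : Fin N × Fin N,
          if p.1.val + 1 = h ∧ a ≤ p.2.val + 1 ∧ p.2.val + 1 ≤ b then M p.1 p.2 else 0 := by
  intro b
  induction b with
  | zero =>
    intro _
    rw [Finset.Icc_eq_empty (by omega), Finset.sum_empty]
    symm
    exact Finset.sum_eq_zero (fun p _ => if_neg (by omega))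
  | succ b ih =>
    intro hbN
    by_cases hab : a ≤ b + 1
    · rw [Finset.sum_Icc_succ_top hab, ih (by omega),
        ← sum_pair_single M h (b + 1) hh1 hhN (by omega) hbN, ← Finset.sum_add_distrib]
      exact Finset.sum_congr rfl (fun p _ => by split_ifs <;> omega)
    · rw [Finset.Icc_eq_empty (by omega), Finset.sum_empty]
      symm
      exact Finset.sum_eq_zero (fun p _ => if_neg (by omega))

lemma rowSums_pair (h : ℕ) (hh1 : 1 ≤ h) (hhN : h - 1 < N) :
    rowSums M ⟨h - 1, hhN⟩ = ∑ p : Fin N × Fin N, if p.1.val + 1 = h then M p.1 p.2 else 0 := by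
  rw [Fintype.sum_prod_type, Finset.sum_eq_single (⟨h - 1, hhN⟩ : Fin N)]
  · unfold rowSums
    refine Finset.sum_congr rfl (fun y _ => ?_)
    rw [if_pos (show h - 1 + 1 = h from by omega)]
  · intro p _ hne
    refine Finset.sum_eq_zero (fun y _ => if_neg ?_)
    intro hc
    have hc' : (p : ℕ) + 1 = h := hc
    exact hne (Fin.ext (show (p : ℕ) = h - 1 by omega))
  · intro hmem
    exact absurd (Finset.mem_univ _) hmem

lemma keySI2 (c k h : ℕ) (hh1 : 1 ≤ h) (hhN : h ≤ N) (hck : c + 1 ≤ k - 1) (hkN : k ≤ N) :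
    sigmaS M h (c + 1) + (∑ j ∈ Finset.Icc 1 (k - 1), ent M h j)
      = sigmaS M (h - 1) (c + 1) + (∑ j ∈ Finset.Icc (c + 1) (k - 1), ent M h j)
        + ∑ p : Fin N × Fin N, (if p.1.val + 1 = h then M p.1 p.2 else 0) := by
  rw [entIcc M h 1 hh1 hhN (by omega) (k - 1) (by omega),
    entIcc M h (c + 1) hh1 hhN (by omega) (k - 1) (by omega)]
  unfold sigmaS colPS
  repeat rw [← Finset.sum_add_distrib]
  refine Finset.sum_congr rfl (fun p _ => ?_)
  split_ifs <;> omega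

lemma keySI1 (c k h : ℕ) (hh1 : 1 ≤ h) (hhN : h ≤ N) (hck : c + 1 ≤ k - 1) (hkN : k ≤ N) :
    sigmaS M (h - 1) (c + 2) + (∑ j ∈ Finset.Icc (c + 2) (k - 1), ent M h j) + mtil M h (c + 1)
      = sigmaS M (h - 1) (c + 1) + (∑ j ∈ Finset.Icc (c + 1) (k - 1), ent M h j)
        + mtil M N (c + 1) := by
  rw [entIcc M h (c + 2) hh1 hhN (by omega) (k - 1) (by omega),
    entIcc M h (c + 1) hh1 hhN (by omega) (k - 1) (by omega)]
  unfold sigmaS mtil colPS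
  repeat rw [← Finset.sum_add_distrib]
  refine Finset.sum_congr rfl (fun p _ => ?_)
  have h1 := p.1.isLt
  have h2 := p.2.isLt
  split_ifs <;> omega

lemma ptil_eq_sigmaS_one (i : ℕ) : ptil (rowSums M) i = sigmaS M i 1 := by
  unfold ptil sigmaS colPS rowSums
  have e0 : (∑ p : Fin N × Fin N, if p.2.val + 1 < 1 then M p.1 p.2 else 0) = 0 :=
    Finset.sum_eq_zero (fun p _ => if_neg (by omega))
  rw [e0, Nat.zero_add, Fintype.sum_prod_type]
  refine Finset.sum_congr rfl (fun l _ => ?_)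
  split_ifs with hc
  · exact Finset.sum_congr rfl (fun y _ => by rw [if_pos ⟨hc, by omega⟩])
  · symm
    exact Finset.sum_eq_zero (fun y _ => if_neg (fun hx => hc hx.1))

end Aux

/-- equation (3.8) in the proof of Lemma `reflection`(3).
For `1 ≤ h ≤ N`, `1 < k ≤ N`, `0 < x ≤ m_{h,k}`, `Σ_{j=1}^{k-1} m_{h,j} + x < λ_h`
(`λ = ro M`), and every `t` with `1 ≤ t ≤ k-1`:
`s_{λ̃_{h-1} + Σ_{j=1}^{k-1} m_{h,j} + x} · Π_t = Π_t · s_{σ_{h-1,t+1} + Σ_{j=t+1}^{k-1} m_{h,j} + x}`. -/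
theorem stmt8 (N r : ℕ) (hN : 2 ≤ N) (M : Fin N → Fin N → ℕ)
    (hMr : ∑ i, ∑ j, M i j = r)
    (h k x : ℕ) (hh1 : 1 ≤ h) (hhN : h ≤ N) (hk1 : 1 < k) (hkN : k ≤ N)
    (hx0 : 0 < x) (hx1 : x ≤ ent M h k)
    (hbound : (∑ j ∈ Finset.Icc 1 (k - 1), ent M h j) + x < rowSums M ⟨h - 1, by omega⟩)
    (t : ℕ) (ht1 : 1 ≤ t) (htk : t ≤ k - 1) :
    sT r (ptil (rowSums M) (h - 1) + (∑ j ∈ Finset.Icc 1 (k - 1), ent M h j) + x)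
        * piProd r M t
      = piProd r M t
          * sT r (sigmaS M (h - 1) (t + 1) + (∑ j ∈ Finset.Icc (t + 1) (k - 1), ent M h j) + x) := by
  have main : ∀ c, c ≤ t →
      sT r (sigmaS M (h - 1) 1 + (∑ j ∈ Finset.Icc 1 (k - 1), ent M h j) + x) * piProd r M c
        = piProd r M c
          * sT r (sigmaS M (h - 1) (c + 1)
              + (∑ j ∈ Finset.Icc (c + 1) (k - 1), ent M h j) + x) := by
    intro c
    induction c with
    | zero => intro _; simp [piProd]
    | succ c ih =>
      intro hc
      have hck : c + 1 ≤ k - 1 := le_trans hc htk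
      rw [piProd_succ M r c, ← mul_assoc, ih (by omega), mul_assoc, mul_assoc]
      congr 1
      have hb' := hbound
      rw [rowSums_pair M h hh1 (by omega)] at hb'
      have hSI2 := keySI2 M c k h hh1 hhN hck hkN
      have hSI1 := keySI1 M c k h hh1 hhN hck hkN
      have hmono := mtil_mono M h N (c + 1) hhN
      have hsum_ge : ent M h (c + 1) ≤ ∑ j ∈ Finset.Icc (c + 1) (k - 1), ent M h j :=
        Finset.single_le_sum (fun _ _ => Nat.zero_le _) (Finset.mem_Icc.mpr ⟨le_refl _, hck⟩)
      have pass := pass_colProd M hMr (c + 1) h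
        (sigmaS M (h - 1) (c + 1) + (∑ j ∈ Finset.Icc (c + 1) (k - 1), ent M h j) + x)
        hh1 hhN (by omega) (by omega) (by omega) (by omega)
      rw [pass]
      simp only [show c + 1 + 1 = c + 2 from by omega]
      exact congrArg _ (congrArg (sT r) (by omega))
  rw [ptil_eq_sigmaS_one M (h - 1)]
  exact main t (le_refl t)
end
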